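/- arXiv:1205.5763 — 4 statements merged into one kernel-verified Lean document; each statement's English description precedes it below -/
import Mathlib

section
/- Let 𝒢 be a finite connected graph with graph distance d, let L ≥ ℓ ≥ 0 be integers and q ∈ (0,1). If a function f : 𝒢 → [0,∞) is (ℓ,q)-subharmonic in a ball B_L(x) with B_L(x) ⊊ 𝒢, then f(x) ≤ q^{⌊(L+1)/(ℓ+1)⌋}·ℳ(f,𝒢), and consequently f(x) ≤ q^{(L−ℓ)/(ℓ+1)}·ℳ(f,𝒢). -/
/-!
Starting at `x`, jump repeatedly to a point where `f` attains its maximum over the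
`(ℓ+1)`-ball around the current point. Each jump gains a factor `q` and moves at most `ℓ + 1`,
and subharmonicity applies at the current point as long as its `ℓ`-ball stays inside `B_L(x)`;
this allows `⌊(L+1)/(ℓ+1)⌋` jumps. The real exponent `(L-ℓ)/(ℓ+1)` is at most that integer.
-/

open Finset

section Defs

variable {Gv : Type*} [Fintype Gv]

/-- The ball `B_r(x) = {y : d(x,y) ≤ r}` of the graph metric, as a `Finset`. -/
noncomputable def gball (G : SimpleGraph Gv) (x : Gv) (r : ℕ) : Finset Gv :=
  Finset.univ.filter (fun y => G.dist x y ≤ r)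

lemma self_mem_gball (G : SimpleGraph Gv) (x : Gv) (r : ℕ) : x ∈ gball G x r := by
  simp [gball, SimpleGraph.dist_self]

/-- `max_{y ∈ B_r(x)} f(y)`. -/
noncomputable def ballMax (G : SimpleGraph Gv) (f : Gv → ℝ) (x : Gv) (r : ℕ) : ℝ :=
  (gball G x r).sup' ⟨x, self_mem_gball G x r⟩ f

/-- `f` is `(ℓ,q)`-subharmonic in the ball `B_L(u)`: for every ball `B_ℓ(x) ⊆ B_L(u)`,
`f x ≤ q · max_{y ∈ B_{ℓ+1}(x)} f y`. -/
def IsSubharmonic (G : SimpleGraph Gv) (f : Gv → ℝ) (ℓ : ℕ) (q : ℝ) (u : Gv) (L : ℕ) : Prop :=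
  ∀ x : Gv, gball G x ℓ ⊆ gball G u L → f x ≤ q * ballMax G f x (ℓ + 1)

end Defs

namespace SimpleGraph

variable {V : Type*} [Fintype V] {G : SimpleGraph V}

lemma mem_gball {x y : V} {r : ℕ} : y ∈ gball G x r ↔ G.dist x y ≤ r := by
  simp [gball]

lemma Connected.gball_subset_gball (hconn : G.Connected) {u y : V} {ℓ L : ℕ}
    (h : G.dist u y + ℓ ≤ L) : gball G y ℓ ⊆ gball G u L := fun z hz => by
  rw [mem_gball] at hz ⊢
  have := hconn.dist_triangle (u := u) (v := y) (w := z)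
  omega

lemma exists_dist_le_eq_ballMax (f : V → ℝ) (y : V) (r : ℕ) :
    ∃ y', G.dist y y' ≤ r ∧ f y' = ballMax G f y r := by
  obtain ⟨y', hy', hmax⟩ := exists_mem_eq_sup' ⟨y, self_mem_gball G y r⟩ f
  exact ⟨y', mem_gball.1 hy', hmax.symm⟩

end SimpleGraph

namespace IsSubharmonic

variable {V : Type*} [Fintype V] {G : SimpleGraph V} {f : V → ℝ} {ℓ L : ℕ} {q : ℝ} {x : V}

lemma exists_step (hsub : IsSubharmonic G f ℓ q x L) (hconn : G.Connected) {y : V}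
    (hy : G.dist x y + ℓ ≤ L) : ∃ y', G.dist y y' ≤ ℓ + 1 ∧ f y ≤ q * f y' := by
  obtain ⟨y', hyy', hmax⟩ := G.exists_dist_le_eq_ballMax f y (ℓ + 1)
  exact ⟨y', hyy', hmax ▸ hsub y (hconn.gball_subset_gball hy)⟩

lemma exists_chain (hsub : IsSubharmonic G f ℓ q x L) (hconn : G.Connected) (hq : 0 ≤ q) :
    ∀ i : ℕ, (ℓ + 1) * i ≤ L + 1 → ∃ y, G.dist x y ≤ (ℓ + 1) * i ∧ f x ≤ q ^ i * f y
  | 0, _ => ⟨x, by simp, by simp⟩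
  | i + 1, hi => by
    obtain ⟨y, hxy, hfy⟩ := exists_chain hsub hconn hq i (by nlinarith)
    obtain ⟨y', hyy', hstep⟩ := hsub.exists_step hconn (y := y) (by nlinarith)
    refine ⟨y', ?_, ?_⟩
    · calc G.dist x y' ≤ G.dist x y + G.dist y y' := hconn.dist_triangle
        _ ≤ (ℓ + 1) * (i + 1) := by nlinarith
    · calc f x ≤ q ^ i * f y := hfy
        _ ≤ q ^ i * (q * f y') := by gcongr
        _ = q ^ (i + 1) * f y' := by ring

theorem le_pow_div_mul_sup' (hsub : IsSubharmonic G f ℓ q x L) (hconn : G.Connected)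
    (hq : 0 ≤ q) : f x ≤ q ^ ((L + 1) / (ℓ + 1)) * univ.sup' ⟨x, mem_univ x⟩ f := by
  obtain ⟨y, -, hfy⟩ := hsub.exists_chain hconn hq _ (Nat.mul_div_le (L + 1) (ℓ + 1))
  exact hfy.trans (by gcongr; exact le_sup' f (mem_univ y))

end IsSubharmonic

lemma sub_div_add_one_le_div_add_one (L ℓ : ℕ) :
    ((L : ℝ) - ℓ) / (ℓ + 1) ≤ ((L + 1) / (ℓ + 1) : ℕ) := by
  rw [div_le_iff₀ (by positivity)]
  have hlt := Nat.lt_div_mul_add (a := L + 1) ℓ.add_one_pos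
  have hle : L + 1 ≤ (L + 1) / (ℓ + 1) * (ℓ + 1) + ℓ := by omega
  have : (L : ℝ) + 1 ≤ ((L + 1) / (ℓ + 1) : ℕ) * (ℓ + 1) + ℓ := by exact_mod_cast hle
  linarith

theorem statement0_general {Gv : Type*} [Fintype Gv] (G : SimpleGraph Gv)
    (hconn : G.Connected) (ℓ L : ℕ)
    (q : ℝ) (hq0 : 0 < q) (hq1 : q < 1)
    (f : Gv → ℝ) (hf : ∀ v, 0 ≤ f v)
    (x : Gv)
    (hsub : IsSubharmonic G f ℓ q x L) :
    f x ≤ q ^ ((L + 1) / (ℓ + 1)) * Finset.univ.sup' ⟨x, Finset.mem_univ x⟩ f ∧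
      f x ≤ q ^ (((L : ℝ) - (ℓ : ℝ)) / ((ℓ : ℝ) + 1)) *
        Finset.univ.sup' ⟨x, Finset.mem_univ x⟩ f := by
  have hM : 0 ≤ univ.sup' ⟨x, mem_univ x⟩ f := (hf x).trans (le_sup' f (mem_univ x))
  have hdecay := hsub.le_pow_div_mul_sup' hconn hq0.le
  refine ⟨hdecay, hdecay.trans (mul_le_mul_of_nonneg_right ?_ hM)⟩
  rw [← Real.rpow_natCast]
  exact Real.rpow_le_rpow_of_exponent_ge hq0 hq1.le (sub_div_add_one_le_div_add_one L ℓ)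

theorem statement0 {Gv : Type*} [Fintype Gv] (G : SimpleGraph Gv)
    (hconn : G.Connected) (ℓ L : ℕ) (hℓL : ℓ ≤ L)
    (q : ℝ) (hq0 : 0 < q) (hq1 : q < 1)
    (f : Gv → ℝ) (hf : ∀ v, 0 ≤ f v)
    (x : Gv) (hproper : gball G x L ≠ Finset.univ)
    (hsub : IsSubharmonic G f ℓ q x L) :
    f x ≤ q ^ ((L + 1) / (ℓ + 1)) * Finset.univ.sup' ⟨x, Finset.mem_univ x⟩ f ∧
      f x ≤ q ^ (((L : ℝ) - (ℓ : ℝ)) / ((ℓ : ℝ) + 1)) *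
        Finset.univ.sup' ⟨x, Finset.mem_univ x⟩ f :=
  statement0_general G hconn ℓ L q hq0 hq1 f hf x hsub
end

section
/- Let 𝒢 be a finite connected graph with distance d satisfying |B_r(x)| ≤ C_d·r^d for all x ∈ 𝒢 and r ≥ 1, and such that every vertex has at most C_d neighbours. Let V : 𝒢 → ℝ be a potential, L ≥ ℓ ≥ 1 integers, m > 0, and E ∈ ℝ with E ∉ Σ(H_𝒢). Suppose B_L(u) ⊊ 𝒢 and every ball B_ℓ(x) ⊆ B_L(u) is (E,m)-nonsingular. Then for every y ∈ 𝒢 ∖ B_L(u), the function x ↦ |G_𝒢(x,y;E)| is (ℓ,q)-subharmonic in B_L(u) with q = exp(−γ(m,ℓ)·ℓ). -/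
/-!
Fix `x` with `B = B_ℓ(x) ⊆ B_L(u)`, so `y ∉ B`. Restricting `(H - E) G(·,y) = δ_y` to the rows
in `B` gives the geometric resolvent identity
`G(x,y) = ∑_{z ∈ B, w ∉ B, z ~ w} G_B(x,z) G(w,y)`.
Every such `z` lies on the sphere `d(x,z) = ℓ ≥ ℓ^{(1+ϱ)/α}` and every such `w` in `B_{ℓ+1}(x)`, so
nonsingularity of `B` gives `C_d² ℓ^d |G_B(x,z)| ≤ q`, while `|G(w,y)|` is at most the maximum over
`B_{ℓ+1}(x)`. There are at most `|B| · C_d ≤ C_d² ℓ^d` pairs `(z,w)`, which cancels the prefactor.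
-/

open Finset

section Defs

variable {Gv : Type*} [Fintype Gv]

/-- The discrete Schrödinger operator `H_Λ = -Δ^D_Λ + V` (Dirichlet restriction to `Λ`,
with `n(x)` the number of neighbours of `x` in the whole graph), as a matrix. -/
noncomputable def Ham [DecidableEq Gv] (G : SimpleGraph Gv) [DecidableRel G.Adj]
    (V : Gv → ℝ) (Λ : Finset Gv) : Matrix Λ Λ ℝ := fun x y =>
  (if (x : Gv) = (y : Gv) then (G.degree (x : Gv) : ℝ) + V (x : Gv) else 0) -
    (if G.Adj (x : Gv) (y : Gv) then 1 else 0)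

/-- The spectrum (set of eigenvalues) of a finite-dimensional operator. -/
noncomputable def specSet {n : Type*} [Fintype n] [DecidableEq n] (H : Matrix n n ℝ) :
    Set ℝ := {E : ℝ | (H - E • (1 : Matrix n n ℝ)).det = 0}

/-- The Green function `G(x,y;E) = ⟨δ_x, (H-E)⁻¹ δ_y⟩`. -/
noncomputable def green {n : Type*} [Fintype n] [DecidableEq n] (H : Matrix n n ℝ)
    (E : ℝ) : Matrix n n ℝ := (H - E • (1 : Matrix n n ℝ))⁻¹

/-- `γ(m,L) = m(1 + L^{-τ})`. -/
noncomputable def gam (m τ : ℝ) (L : ℕ) : ℝ := m * (1 + (L : ℝ) ^ (-τ))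

/-- The ball `B_L(u)` is `(E,m)`-nonsingular: `E` is away from the spectrum of `H_{B_L(u)}`
and `C_d² L^d |G_{B_L(u)}(x,y;E)| ≤ exp(-γ(m,L) d(x,y))` whenever `d(x,y) ≥ L^{(1+ϱ)/α}`. -/
noncomputable def IsNS [DecidableEq Gv] (G : SimpleGraph Gv) [DecidableRel G.Adj]
    (V : Gv → ℝ) (Cd : ℝ) (d : ℕ) (α τ ϱ : ℝ) (u : Gv) (L : ℕ) (E m : ℝ) : Prop :=
  E ∉ specSet (Ham G V (gball G u L)) ∧
  ∀ x y : (gball G u L), ((L : ℝ) ^ ((1 + ϱ) / α) ≤ (G.dist (x : Gv) (y : Gv) : ℝ)) →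
    Cd ^ 2 * (L : ℝ) ^ d * |green (Ham G V (gball G u L)) E x y| ≤
      Real.exp (-(gam m τ L) * (G.dist (x : Gv) (y : Gv) : ℝ))

end Defs

namespace Matrix

variable {ι κ R : Type*} [Fintype ι] [DecidableEq ι] [Fintype κ] [DecidableEq κ] [CommRing R]

theorem inv_apply_eq_neg_sum_submatrix_inv (A : Matrix ι ι R) (e : κ ↪ ι)
    (hA : IsUnit A.det) (hAe : IsUnit (A.submatrix e e).det) (x : κ) {y : ι}
    (hy : y ∉ univ.map e) :
    A⁻¹ (e x) y =
      -∑ z, (A.submatrix e e)⁻¹ x z * ∑ w ∈ (univ.map e)ᶜ, A (e z) w * A⁻¹ w y := by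
  set g : κ → R := fun z => A⁻¹ (e z) y
  set h : κ → R := fun z => ∑ w ∈ (univ.map e)ᶜ, A (e z) w * A⁻¹ w y
  have hrow : A.submatrix e e *ᵥ g = -h := by
    funext z
    have hzero : (A * A⁻¹) (e z) y = 0 := by
      rw [mul_nonsing_inv A hA, one_apply_ne]
      rintro rfl
      exact hy (mem_map_of_mem _ (mem_univ z))
    rw [mul_apply, ← sum_add_sum_compl (univ.map e), sum_map] at hzero
    simp only [mulVec, dotProduct, submatrix_apply, Pi.neg_apply, h, g]
    linear_combination hzero
  have hg : g = -((A.submatrix e e)⁻¹ *ᵥ h) := by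
    rw [← mulVec_neg, ← hrow, mulVec_mulVec, nonsing_inv_mul _ hAe, one_mulVec]
  simpa [mulVec, dotProduct] using congrFun hg x

end Matrix

def Finset.inclusion {α : Type*} {s t : Finset α} (h : s ⊆ t) : s ↪ t :=
  ⟨fun z => ⟨z, h z.2⟩, fun _ _ hab => Subtype.ext (Subtype.mk.inj hab)⟩

@[simp]
lemma Finset.coe_inclusion {α : Type*} {s t : Finset α} (h : s ⊆ t) (a : s) :
    (inclusion h a : α) = a :=
  rfl

lemma dist_eq_of_adj_of_mem_gball_of_not_mem_gball {Gv : Type*} [Fintype Gv]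
    (G : SimpleGraph Gv) {x z w : Gv} {r : ℕ}
    (hz : z ∈ gball G x r) (hw : w ∉ gball G x r) (hzw : G.Adj z w) :
    G.dist x z = r ∧ G.dist x w = r + 1 := by
  simp only [gball, mem_filter, mem_univ, true_and, not_le] at hz hw
  have h₁ := hzw.reachable.dist_triangle_right x
  have h₂ := hzw.symm.reachable.dist_triangle_right x
  rw [SimpleGraph.dist_eq_one_iff_adj.mpr hzw] at h₁
  rw [SimpleGraph.dist_eq_one_iff_adj.mpr hzw.symm] at h₂
  omega

section Schrodinger

variable {Gv : Type*} [Fintype Gv] [DecidableEq Gv] (G : SimpleGraph Gv) [DecidableRel G.Adj]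

lemma Ham_sub_smul_submatrix_inclusion (V : Gv → ℝ) {Λ' Λ : Finset Gv} (h : Λ' ⊆ Λ) (E : ℝ) :
    (Ham G V Λ - E • 1).submatrix (inclusion h) (inclusion h) = Ham G V Λ' - E • 1 := by
  ext a b
  simp only [Matrix.submatrix_apply, Matrix.sub_apply, Matrix.smul_apply, Matrix.one_apply,
    (inclusion h).injective.eq_iff]
  rfl

lemma Ham_sub_smul_apply_of_ne (V : Gv → ℝ) {Λ : Finset Gv} (E : ℝ) {a b : Λ}
    (hab : (a : Gv) ≠ b) : (Ham G V Λ - E • 1) a b = -if G.Adj a b then 1 else 0 := by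
  have hab' : a ≠ b := fun e => hab (congrArg Subtype.val e)
  simp [Ham, hab, Matrix.one_apply_ne hab']

theorem green_apply_eq_sum_boundary (V : Gv → ℝ) {Λ' Λ : Finset Gv} (h : Λ' ⊆ Λ) {E : ℝ}
    (hE : E ∉ specSet (Ham G V Λ)) (hE' : E ∉ specSet (Ham G V Λ')) (x : Λ') {y : Λ}
    (hy : (y : Gv) ∉ Λ') :
    green (Ham G V Λ) E (inclusion h x) y = ∑ z, green (Ham G V Λ') E x z *
      ∑ w ∈ univ.filter (fun w : Λ => (w : Gv) ∉ Λ' ∧ G.Adj z w), green (Ham G V Λ) E w y := by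
  have hcompl : (univ.map (inclusion h))ᶜ = univ.filter (fun w : Λ => (w : Gv) ∉ Λ') := by
    ext w
    simp only [mem_compl, mem_map, mem_univ, true_and, mem_filter]
    exact ⟨fun hw hw' => hw ⟨⟨w, hw'⟩, rfl⟩, fun hw ⟨a, ha⟩ => hw (ha ▸ a.2)⟩
  have hy' : y ∉ univ.map (inclusion h) := by
    rw [← mem_compl, hcompl, mem_filter]
    exact ⟨mem_univ y, hy⟩
  have hAe := Ham_sub_smul_submatrix_inclusion G V h E
  have hexp := (Ham G V Λ - E • 1).inv_apply_eq_neg_sum_submatrix_inv (inclusion h)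
    (isUnit_iff_ne_zero.mpr hE) (hAe ▸ isUnit_iff_ne_zero.mpr hE') x hy'
  rw [hAe, hcompl] at hexp
  rw [green, hexp, ← sum_neg_distrib]
  refine sum_congr rfl fun z _ => ?_
  rw [← mul_neg, ← sum_neg_distrib, sum_filter, sum_filter]
  congr 1
  refine sum_congr rfl fun w _ => ?_
  by_cases hw : (w : Gv) ∈ Λ'
  · simp [hw]
  · have hne : (inclusion h z : Gv) ≠ w := fun e => hw (e ▸ z.2)
    by_cases hadj : G.Adj z w <;> simp [Ham_sub_smul_apply_of_ne G V E hne, hw, hadj]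

theorem abs_green_le_sum_boundary (V : Gv → ℝ) {Λ' Λ : Finset Gv} (h : Λ' ⊆ Λ) {E : ℝ}
    (hE : E ∉ specSet (Ham G V Λ)) (hE' : E ∉ specSet (Ham G V Λ')) (x : Λ') {y : Λ}
    (hy : (y : Gv) ∉ Λ') :
    |green (Ham G V Λ) E (inclusion h x) y| ≤ ∑ z, |green (Ham G V Λ') E x z| *
      ∑ w ∈ univ.filter (fun w : Λ => (w : Gv) ∉ Λ' ∧ G.Adj z w), |green (Ham G V Λ) E w y| := by
  rw [green_apply_eq_sum_boundary G V h hE hE' x hy]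
  refine (abs_sum_le_sum_abs _ _).trans (sum_le_sum fun z _ => ?_)
  rw [abs_mul]
  exact mul_le_mul_of_nonneg_left (abs_sum_le_sum_abs _ _) (abs_nonneg _)

lemma card_filter_not_mem_adj_le_degree (Λ' Λ : Finset Gv) (z : Gv) :
    #(univ.filter (fun w : Λ => (w : Gv) ∉ Λ' ∧ G.Adj z w)) ≤ G.degree z := by
  rw [← SimpleGraph.card_neighborFinset_eq_degree]
  refine card_le_card_of_injOn (fun w => (w : Gv)) (fun w hw => ?_) Subtype.val_injective.injOn
  simpa using (mem_filter.mp hw).2.2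

lemma sum_boundary_le_degree_mul_ballMax {f : Gv → ℝ} (hf : 0 ≤ f) {x z : Gv} {r : ℕ}
    (hz : z ∈ gball G x r) (Λ : Finset Gv) :
    ∑ w ∈ univ.filter (fun w : Λ => (w : Gv) ∉ gball G x r ∧ G.Adj z w), f w ≤
      G.degree z * ballMax G f x (r + 1) := by
  refine (sum_le_card_nsmul _ _ (ballMax G f x (r + 1)) fun w hw => ?_).trans ?_
  · obtain ⟨-, hw, hzw⟩ := mem_filter.mp hw
    refine le_sup' f ?_
    simp [gball, (dist_eq_of_adj_of_mem_gball_of_not_mem_gball G hz hw hzw).2]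
  · have hM : 0 ≤ ballMax G f x (r + 1) := (hf x).trans (le_sup' f (self_mem_gball G x (r + 1)))
    rw [nsmul_eq_mul]
    gcongr
    exact_mod_cast card_filter_not_mem_adj_le_degree G _ Λ z

variable {G} {V : Gv → ℝ} {Cd α τ ϱ E m : ℝ} {d ℓ : ℕ} {x : Gv}

lemma IsNS.mul_abs_green_le_of_dist_eq (hNS : IsNS G V Cd d α τ ϱ x ℓ E m) (hℓ : 1 ≤ ℓ)
    (hα : (1 + ϱ) / α ≤ 1) (z : gball G x ℓ) (hz : G.dist x z = ℓ) :
    Cd ^ 2 * (ℓ : ℝ) ^ d * |green (Ham G V (gball G x ℓ)) E ⟨x, self_mem_gball G x ℓ⟩ z| ≤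
      Real.exp (-gam m τ ℓ * ℓ) := by
  have hℓ' : (1 : ℝ) ≤ ℓ := by exact_mod_cast hℓ
  have h := hNS.2 ⟨x, self_mem_gball G x ℓ⟩ z (by
    rw [hz]
    simpa using Real.rpow_le_rpow_of_exponent_le hℓ' hα)
  rwa [hz] at h

lemma IsNS.abs_green_mul_sum_boundary_le (hNS : IsNS G V Cd d α τ ϱ x ℓ E m) (hℓ : 1 ≤ ℓ)
    (hα : (1 + ϱ) / α ≤ 1) (hCd : 0 < Cd) (hdeg : ∀ v : Gv, (G.degree v : ℝ) ≤ Cd)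
    {f : Gv → ℝ} (hf : 0 ≤ f) (Λ : Finset Gv) (z : gball G x ℓ) :
    |green (Ham G V (gball G x ℓ)) E ⟨x, self_mem_gball G x ℓ⟩ z| *
        ∑ w ∈ univ.filter (fun w : Λ => (w : Gv) ∉ gball G x ℓ ∧ G.Adj z w), f w ≤
      Real.exp (-gam m τ ℓ * ℓ) / (Cd ^ 2 * ℓ ^ d) * (Cd * ballMax G f x (ℓ + 1)) := by
  have hM : 0 ≤ ballMax G f x (ℓ + 1) := (hf x).trans (le_sup' f (self_mem_gball G x (ℓ + 1)))
  have hsum := (sum_boundary_le_degree_mul_ballMax G hf z.2 Λ).trans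
    (mul_le_mul_of_nonneg_right (hdeg z) hM)
  rcases (univ.filter (fun w : Λ => (w : Gv) ∉ gball G x ℓ ∧ G.Adj z w)).eq_empty_or_nonempty
    with hbd | ⟨w, hw⟩
  · rw [hbd, sum_empty, mul_zero]
    positivity
  obtain ⟨-, hw, hzw⟩ := mem_filter.mp hw
  have hz := (dist_eq_of_adj_of_mem_gball_of_not_mem_gball G z.2 hw hzw).1
  have hgreen : |green (Ham G V (gball G x ℓ)) E ⟨x, self_mem_gball G x ℓ⟩ z| ≤
      Real.exp (-gam m τ ℓ * ℓ) / (Cd ^ 2 * ℓ ^ d) := by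
    rw [le_div_iff₀' (by positivity)]
    exact hNS.mul_abs_green_le_of_dist_eq hℓ hα z hz
  exact mul_le_mul hgreen hsum (sum_nonneg fun w _ => hf w) (by positivity)

end Schrodinger

theorem statement1_general {Gv : Type*} [Fintype Gv] [DecidableEq Gv]
    (G : SimpleGraph Gv) [DecidableRel G.Adj]
    (Cd : ℝ) (d : ℕ) (hCd : 1 ≤ Cd)
    (hball : ∀ (x : Gv) (r : ℕ), 1 ≤ r → ((gball G x r).card : ℝ) ≤ Cd * (r : ℝ) ^ d)
    (hdeg : ∀ v : Gv, (G.degree v : ℝ) ≤ Cd)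
    (V : Gv → ℝ) (ℓ L : ℕ) (h1ℓ : 1 ≤ ℓ) (m : ℝ)
    (E : ℝ) (hE : E ∉ specSet (Ham G V Finset.univ))
    (u : Gv)
    (hNS : ∀ x : Gv, gball G x ℓ ⊆ gball G u L →
      IsNS G V Cd d (3/2) (1/8) (1/6) x ℓ E m)
    (y : Gv) (hy : y ∉ gball G u L) :
    IsSubharmonic G
      (fun x => |green (Ham G V Finset.univ) E ⟨x, Finset.mem_univ x⟩ ⟨y, Finset.mem_univ y⟩|)
      ℓ (Real.exp (-(gam m (1/8) ℓ) * (ℓ : ℝ))) u L := by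
  intro x hx
  have hNSx := hNS x hx
  have hCd₀ : 0 < Cd := by linarith
  set f : Gv → ℝ := fun x => |green (Ham G V univ) E ⟨x, mem_univ x⟩ ⟨y, mem_univ y⟩|
  set M := ballMax G f x (ℓ + 1)
  set q := Real.exp (-(gam m (1/8) ℓ) * ℓ)
  have hM : 0 ≤ M := (abs_nonneg _).trans (le_sup' f (self_mem_gball G x (ℓ + 1)))
  calc f x ≤ ∑ z, |green (Ham G V (gball G x ℓ)) E ⟨x, self_mem_gball G x ℓ⟩ z| *
        ∑ w ∈ univ.filter (fun w : (univ : Finset Gv) => (w : Gv) ∉ gball G x ℓ ∧ G.Adj z w),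
          f w :=
        abs_green_le_sum_boundary G V (subset_univ (gball G x ℓ)) hE hNSx.1
          ⟨x, self_mem_gball G x ℓ⟩ (y := ⟨y, mem_univ y⟩) (fun hyB => hy (hx hyB))
    _ ≤ ∑ _z : gball G x ℓ, q / (Cd ^ 2 * ℓ ^ d) * (Cd * M) := sum_le_sum fun z _ =>
        hNSx.abs_green_mul_sum_boundary_le (f := f) h1ℓ (by norm_num) hCd₀ hdeg
          (fun _ => abs_nonneg _) univ z
    _ = #(gball G x ℓ) * (q / (Cd ^ 2 * ℓ ^ d) * (Cd * M)) := by simp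
    _ ≤ Cd * ℓ ^ d * (q / (Cd ^ 2 * ℓ ^ d) * (Cd * M)) := by
        gcongr
        exact hball x ℓ h1ℓ
    _ = q * M := by field_simp

theorem statement1 {Gv : Type*} [Fintype Gv] [DecidableEq Gv]
    (G : SimpleGraph Gv) [DecidableRel G.Adj] (hconn : G.Connected)
    (Cd : ℝ) (d : ℕ) (hCd : 1 ≤ Cd) (hd : 1 ≤ d)
    (hball : ∀ (x : Gv) (r : ℕ), 1 ≤ r → ((gball G x r).card : ℝ) ≤ Cd * (r : ℝ) ^ d)
    (hdeg : ∀ v : Gv, (G.degree v : ℝ) ≤ Cd)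
    (V : Gv → ℝ) (ℓ L : ℕ) (h1ℓ : 1 ≤ ℓ) (hℓL : ℓ ≤ L) (m : ℝ) (hm : 0 < m)
    (E : ℝ) (hE : E ∉ specSet (Ham G V Finset.univ))
    (u : Gv) (hproper : gball G u L ≠ Finset.univ)
    (hNS : ∀ x : Gv, gball G x ℓ ⊆ gball G u L →
      IsNS G V Cd d (3/2) (1/8) (1/6) x ℓ E m)
    (y : Gv) (hy : y ∉ gball G u L) :
    IsSubharmonic G
      (fun x => |green (Ham G V Finset.univ) E ⟨x, Finset.mem_univ x⟩ ⟨y, Finset.mem_univ y⟩|)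
      ℓ (Real.exp (-(gam m (1/8) ℓ) * (ℓ : ℝ))) u L :=
  statement1_general G Cd d hCd hball hdeg V ℓ L h1ℓ m E hE u hNS y hy
end

section
/- Let d ≥ 1, C_d ≥ 1, α ∈ (1,2) and κ > 2αd/(2−α), and set θ := 2/α − 2d/κ − 1, so that θ > 0. Let L_0 ≥ 2 and L_{k+1} = L_k^α (real scales), and let (P_k)_{k≥0} be a sequence of nonnegative reals satisfying P_{k+1} ≤ C_d²·L_{k+1}^{2d}·P_k² for all k ≥ k₀. If P_{k₀} ≤ C_d^{−2}·L_{k₀}^{−κ(1+θ)^{k₀}} for some k₀ ≥ 0, then P_k ≤ C_d^{−2}·L_k^{−κ(1+θ)^{k}} for all k ≥ k₀; in particular P_k decays faster than any power of L_k. -/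
/-!
Write `P k ≤ (Cd²)⁻¹ L_k^{-e_k}`. Squaring the bound at scale `L_k` and paying the factor
`Cd² L_{k+1}^{2d} = Cd² L_k^{2dα}` gives `P (k+1) ≤ (Cd²)⁻¹ L_k^{2dα - 2e_k}`, so the bound propagates
as soon as `α e_{k+1} ≤ 2e_k - 2dα`. For `e_k = κ (1+θ)^k` the choice of `θ` makes
`α (1+θ) κ = 2κ - 2dα`, and the condition reduces to `(1+θ)^k ≥ 1`.
-/

open Real

lemma one_le_of_rpow_succ {L : ℕ → ℝ} {α : ℝ} (hα : 0 ≤ α) (hL0 : 1 ≤ L 0)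
    (hLrec : ∀ k, L (k + 1) = L k ^ α) (k : ℕ) : 1 ≤ L k := by
  induction k with
  | zero => exact hL0
  | succ k ih => rw [hLrec]; exact one_le_rpow ih hα

lemma le_inv_mul_rpow_of_sq_step {c L p p' d α e e' : ℝ} (hc : 0 ≤ c) (hL : 1 ≤ L)
    (hp : 0 ≤ p) (hpe : p ≤ c⁻¹ * L ^ (-e)) (hp' : p' ≤ c * (L ^ α) ^ (2 * d) * p ^ 2)
    (he : α * e' ≤ 2 * e - 2 * d * α) :
    p' ≤ c⁻¹ * (L ^ α) ^ (-e') := by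
  have hL0 : 0 ≤ L := zero_le_one.trans hL
  -- also true for `c = 0`, as `0⁻¹ = 0`
  have hc_cancel : c * (c⁻¹) ^ 2 = c⁻¹ := by
    rw [sq, ← mul_assoc, mul_comm c]; simpa using mul_inv_mul_cancel c⁻¹
  calc p' ≤ c * (L ^ α) ^ (2 * d) * (c⁻¹ * L ^ (-e)) ^ 2 := hp'.trans (by gcongr)
    _ = c⁻¹ * L ^ (α * (2 * d) + -e * 2) := by
        have hsq : L ^ (-e * 2) = (L ^ (-e)) ^ 2 := by exact_mod_cast rpow_mul_natCast hL0 (-e) 2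
        rw [rpow_add (by positivity), ← rpow_mul hL0, mul_pow, hsq]
        linear_combination (L ^ (α * (2 * d)) * (L ^ (-e)) ^ 2) * hc_cancel
    _ ≤ c⁻¹ * L ^ (α * -e') :=
        mul_le_mul_of_nonneg_left (rpow_le_rpow_of_exponent_le hL (by linarith)) (inv_nonneg.2 hc)
    _ = c⁻¹ * (L ^ α) ^ (-e') := by rw [rpow_mul hL0]

lemma le_inv_mul_rpow_of_sq_recursion {c d α : ℝ} {L P e : ℕ → ℝ} {k₀ : ℕ} (hc : 0 ≤ c)
    (hα : 0 ≤ α) (hL0 : 1 ≤ L 0) (hLrec : ∀ k, L (k + 1) = L k ^ α) (hP : ∀ k, 0 ≤ P k)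
    (hrec : ∀ k, k₀ ≤ k → P (k + 1) ≤ c * L (k + 1) ^ (2 * d) * P k ^ 2)
    (he : ∀ k, k₀ ≤ k → α * e (k + 1) ≤ 2 * e k - 2 * d * α)
    (hinit : P k₀ ≤ c⁻¹ * L k₀ ^ (-e k₀)) :
    ∀ k, k₀ ≤ k → P k ≤ c⁻¹ * L k ^ (-e k) := by
  intro k hk
  induction k, hk using Nat.le_induction with
  | base => exact hinit
  | succ k hk ih =>
    have hstep := hrec k hk
    rw [hLrec] at hstep ⊢
    exact le_inv_mul_rpow_of_sq_step hc (one_le_of_rpow_succ hα hL0 hLrec k) (hP k) ih hstep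
      (he k hk)

section Exponents

variable {d α κ θ : ℝ}

lemma growth_rate_pos (hd : 0 ≤ d) (hα0 : 0 < α) (hα2 : α < 2) (hκ : 2 * α * d / (2 - α) < κ)
    (hθ : θ = 2 / α - 2 * d / κ - 1) : 0 < θ := by
  have h2α : 0 < 2 - α := by linarith
  have hκ0 : 0 < κ := lt_of_le_of_lt (by positivity) hκ
  have hκ' : 2 * α * d < κ * (2 - α) := (div_lt_iff₀ h2α).mp hκ
  have hlt : 2 * d / κ < 2 / α - 1 := by
    rw [div_sub_one hα0.ne', div_lt_div_iff₀ hκ0 hα0]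
    linarith
  linarith

lemma mul_one_add_growth_rate (hα : α ≠ 0) (hκ : κ ≠ 0) (hθ : θ = 2 / α - 2 * d / κ - 1) :
    α * ((1 + θ) * κ) = 2 * κ - 2 * d * α := by
  rw [hθ]; field_simp; ring

lemma growth_exponent_step (hd : 0 ≤ d) (hα : 0 < α) (hκ : κ ≠ 0) (hθ0 : 0 ≤ θ)
    (hθ : θ = 2 / α - 2 * d / κ - 1) (k : ℕ) :
    α * (κ * (1 + θ) ^ (k + 1)) ≤ 2 * (κ * (1 + θ) ^ k) - 2 * d * α := by
  have hid := mul_one_add_growth_rate hα.ne' hκ hθ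
  have hpow : 1 ≤ (1 + θ) ^ k := one_le_pow₀ (by linarith)
  have hdα : 0 ≤ 2 * d * α := by positivity
  calc α * (κ * (1 + θ) ^ (k + 1)) = (2 * κ - 2 * d * α) * (1 + θ) ^ k := by
        rw [← hid, pow_succ]; ring
    _ ≤ 2 * (κ * (1 + θ) ^ k) - 2 * d * α := by nlinarith

end Exponents

theorem statement5_general (d Cd : ℝ) (hd : 1 ≤ d)
    (α : ℝ) (hα1 : 1 < α) (hα2 : α < 2)
    (κ : ℝ) (hκ : 2 * α * d / (2 - α) < κ)
    (θ : ℝ) (hθ : θ = 2 / α - 2 * d / κ - 1)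
    (L : ℕ → ℝ) (hL0 : 2 ≤ L 0) (hLrec : ∀ k : ℕ, L (k + 1) = L k ^ α)
    (P : ℕ → ℝ) (hP : ∀ k, 0 ≤ P k) (k₀ : ℕ)
    (hrec : ∀ k : ℕ, k₀ ≤ k → P (k + 1) ≤ Cd ^ 2 * L (k + 1) ^ (2 * d) * P k ^ 2)
    (hinit : P k₀ ≤ (Cd ^ 2)⁻¹ * L k₀ ^ (-(κ * (1 + θ) ^ k₀))) :
    0 < θ ∧ ∀ k : ℕ, k₀ ≤ k → P k ≤ (Cd ^ 2)⁻¹ * L k ^ (-(κ * (1 + θ) ^ k)) := by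
  have hd0 : 0 ≤ d := by linarith
  have hα0 : 0 < α := by linarith
  have hθ0 : 0 < θ := growth_rate_pos hd0 hα0 hα2 hκ hθ
  have hκ0 : 0 < κ := lt_of_le_of_lt (div_nonneg (by positivity) (by linarith)) hκ
  refine ⟨hθ0, le_inv_mul_rpow_of_sq_recursion (sq_nonneg Cd) hα0.le (by linarith) hLrec hP
    hrec (fun k _ => growth_exponent_step hd0 hα0 hκ0.ne' hθ0.le hθ k) hinit⟩

theorem statement5 (d Cd : ℝ) (hd : 1 ≤ d) (hCd : 1 ≤ Cd)
    (α : ℝ) (hα1 : 1 < α) (hα2 : α < 2)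
    (κ : ℝ) (hκ : 2 * α * d / (2 - α) < κ)
    (θ : ℝ) (hθ : θ = 2 / α - 2 * d / κ - 1)
    (L : ℕ → ℝ) (hL0 : 2 ≤ L 0) (hLrec : ∀ k : ℕ, L (k + 1) = L k ^ α)
    (P : ℕ → ℝ) (hP : ∀ k, 0 ≤ P k) (k₀ : ℕ)
    (hrec : ∀ k : ℕ, k₀ ≤ k → P (k + 1) ≤ Cd ^ 2 * L (k + 1) ^ (2 * d) * P k ^ 2)
    (hinit : P k₀ ≤ (Cd ^ 2)⁻¹ * L k₀ ^ (-(κ * (1 + θ) ^ k₀))) :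
    0 < θ ∧ ∀ k : ℕ, k₀ ≤ k → P k ≤ (Cd ^ 2)⁻¹ * L k ^ (-(κ * (1 + θ) ^ k)) :=
  statement5_general d Cd hd α hα1 hα2 κ hκ θ hθ L hL0 hLrec P hP k₀ hrec hinit
end

section
/- Let 𝒢 be a finite connected graph with distance d, let ℓ ≥ 0 be an integer, q ∈ (0,1), B_L(u) ⊊ 𝒢 a ball with L ≥ ℓ, and 𝓡 ⊆ B_L(u). Let f : 𝒢 → [0,∞) be (ℓ,q,𝓡)-subharmonic in B_L(u). Suppose the complement B_L(u) ∖ 𝓡 is covered by annuli A_i = B_{b_i}(u) ∖ B_{a_i}(u), i = 1,…,n, with widths b_i − a_i ≤ c_i·ℓ for positive integers c_i, where C := Σ_{i=1}^{n} c_i satisfies 2C(ℓ+1) < L. Then f(u) ≤ q^{⌊(L+1)/(ℓ+1)⌋ − 2C}·ℳ(f,𝒢). -/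
/-!
Statement 13: radial descent bound for `(ℓ,q,𝓡)`-subharmonic functions whose singular set
is covered by annuli (Lemma `RDB.annuli` in the paper).
-/

open Finset

section Defs

variable {Gv : Type*} [Fintype Gv]

/-- The sphere `S_r(u) = {y : d(u,y) = r}`. -/
noncomputable def gsphere (G : SimpleGraph Gv) (u : Gv) (r : ℕ) : Finset Gv :=
  Finset.univ.filter (fun y => G.dist u y = r)

/-- `f` is `(ℓ,q,𝓡)`-subharmonic in `B_L(u)`:
(i) every `x ∈ 𝓡` satisfies `f x ≤ q · max_{B_{ℓ+1}(x)} f`;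
(ii) for every `x ∈ B_L(u)` and every `r` with `max(d(u,x), ℓ+1) ≤ r ≤ L-ℓ` and
`S_r(u) ⊆ 𝓡`, one has `f x ≤ q · max_{B_{r+ℓ+1}(u)} f`. -/
def IsSubharmonicR (G : SimpleGraph Gv) (f : Gv → ℝ) (ℓ : ℕ) (q : ℝ)
    (R : Set Gv) (u : Gv) (L : ℕ) : Prop :=
  (∀ x ∈ R, f x ≤ q * ballMax G f x (ℓ + 1)) ∧
  (∀ x ∈ gball G u L, ∀ r : ℕ, max (G.dist u x) (ℓ + 1) ≤ r → r ≤ L - ℓ →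
    (↑(gsphere G u r) : Set Gv) ⊆ R → f x ≤ q * ballMax G f u (r + ℓ + 1))

end Defs


/-! The balls `B_{j(ℓ+1)}(u)` form a chain along which `max f` drops by a factor `q` at every
step `j` whose sphere `S_{j(ℓ+1)}(u)` lies in `𝓡` (condition (ii)), and does not increase at
the other steps. Such a sphere can only fail to lie in `𝓡` if its radius falls into one of the
annuli, and an annulus of width at most `cᵢ ℓ` contains at most `cᵢ` multiples of `ℓ + 1`.
Condition (i) at the centre, which lies in no annulus, gives one more factor `q`, so the
exponent is at least `1 + (T - 1 - ∑ cᵢ)` with `T = ⌊(L+1)/(ℓ+1)⌋`. -/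

section Balls

variable {V : Type*} [Fintype V] (G : SimpleGraph V)

@[simp]
lemma mem_gball {x y : V} {r : ℕ} : y ∈ gball G x r ↔ G.dist x y ≤ r := by
  simp [gball]

@[simp]
lemma mem_gsphere {u y : V} {r : ℕ} : y ∈ gsphere G u r ↔ G.dist u y = r := by
  simp [gsphere]

lemma gball_mono {x : V} {s t : ℕ} (hst : s ≤ t) : gball G x s ⊆ gball G x t := fun _ hy =>
  (mem_gball G).2 (((mem_gball G).1 hy).trans hst)

variable {G} (f : V → ℝ)

lemma le_ballMax {x y : V} {r : ℕ} (hy : y ∈ gball G x r) : f y ≤ ballMax G f x r :=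
  le_sup' f hy

lemma ballMax_mono {x : V} {s t : ℕ} (hst : s ≤ t) : ballMax G f x s ≤ ballMax G f x t :=
  sup'_le _ _ fun _ hy => le_ballMax f (gball_mono G hst hy)

lemma ballMax_le_sup' (x : V) (r : ℕ) :
    ballMax G f x r ≤ univ.sup' ⟨x, mem_univ x⟩ f :=
  sup'_le _ _ fun y _ => le_sup' f (mem_univ y)

end Balls

lemma IsSubharmonicR.ballMax_le_mul_ballMax {V : Type*} [Fintype V] {G : SimpleGraph V}
    {f : V → ℝ} {ℓ : ℕ} {q : ℝ} {R : Set V} {u : V} {L r : ℕ}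
    (hsub : IsSubharmonicR G f ℓ q R u L) (hr : ℓ + 1 ≤ r) (hrL : r ≤ L - ℓ)
    (hS : (↑(gsphere G u r) : Set V) ⊆ R) :
    ballMax G f u r ≤ q * ballMax G f u (r + ℓ + 1) := by
  refine sup'_le _ _ fun x hx => ?_
  have hxr : G.dist u x ≤ r := (mem_gball G).1 hx
  exact hsub.2 x ((mem_gball G).2 (by omega)) r (max_le hxr hr) hrL hS

lemma Nat.div_sub_div_le_of_le_add_mul {a b c m : ℕ} (hm : 0 < m) (h : b ≤ a + c * m) :
    b / m - a / m ≤ c := by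
  have := Nat.div_le_div_right (c := m) h
  rw [Nat.add_mul_div_right _ _ hm] at this
  omega

lemma card_le_sum_of_forall_exists_mul_mem_Ioc {ι : Type*} [Fintype ι] {a b c : ι → ℕ} {ℓ : ℕ}
    (hwidth : ∀ i, b i - a i ≤ c i * ℓ) (S : Finset ℕ)
    (hS : ∀ j ∈ S, ∃ i, a i < j * (ℓ + 1) ∧ j * (ℓ + 1) ≤ b i) :
    #S ≤ ∑ i, c i := by
  classical
  have hsub : S ⊆ univ.biUnion fun i => Ioc (a i / (ℓ + 1)) (b i / (ℓ + 1)) := by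
    intro j hj
    obtain ⟨i, hai, hbi⟩ := hS j hj
    exact mem_biUnion.2 ⟨i, mem_univ i, mem_Ioc.2
      ⟨(Nat.div_lt_iff_lt_mul (by omega)).2 hai, (Nat.le_div_iff_mul_le (by omega)).2 hbi⟩⟩
  calc #S ≤ ∑ i, #(Ioc (a i / (ℓ + 1)) (b i / (ℓ + 1))) :=
        (card_le_card hsub).trans card_biUnion_le
    _ ≤ ∑ i, c i := sum_le_sum fun i _ => by
        rw [Nat.card_Ioc]
        have hcℓ : c i * ℓ ≤ c i * (ℓ + 1) := Nat.mul_le_mul_left _ (Nat.le_succ ℓ)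
        have := hwidth i
        exact Nat.div_sub_div_le_of_le_add_mul (by omega) (by omega)

lemma le_pow_card_filter_mul_of_step {M : ℕ → ℝ} {q : ℝ} (hq : 0 ≤ q) (p : ℕ → Prop)
    [DecidablePred p] {a T : ℕ} (haT : a ≤ T)
    (hmono : ∀ j, a ≤ j → j < T → M j ≤ M (j + 1))
    (hstep : ∀ j, a ≤ j → j < T → p j → M j ≤ q * M (j + 1)) :
    M a ≤ q ^ #{j ∈ Ico a T | p j} * M T := by
  induction T, haT using Nat.le_induction with
  | base => simp
  | succ T haT ih =>
    have ih := ih (fun j h₁ h₂ => hmono j h₁ (by omega)) (fun j h₁ h₂ => hstep j h₁ (by omega))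
    rw [Nat.Ico_succ_right_eq_insert_Ico haT, filter_insert]
    by_cases hp : p T
    · rw [if_pos hp, card_insert_of_notMem (by simp), pow_succ, mul_assoc]
      exact ih.trans (by gcongr; exact hstep T haT (by omega) hp)
    · rw [if_neg hp]
      exact ih.trans (by gcongr; exact hmono T haT (by omega))

lemma Nat.mul_add_one_le_sub_of_lt_div {j ℓ L : ℕ} (hj : j < (L + 1) / (ℓ + 1)) :
    j * (ℓ + 1) ≤ L - ℓ := by
  have := (Nat.le_div_iff_mul_le (by omega)).1 hj
  rw [Nat.succ_mul] at this
  omega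

section Annuli

variable {V : Type*} [Fintype V] {G : SimpleGraph V} {R : Set V} {u : V} {L : ℕ}
  {ι : Type*} {a b : ι → ℕ}

lemma exists_annulus_of_not_gsphere_subset
    (hcover : (↑(gball G u L) : Set V) \ R ⊆
      ⋃ i, ((↑(gball G u (b i)) : Set V) \ ↑(gball G u (a i))))
    {r : ℕ} (hrL : r ≤ L) (hS : ¬ (↑(gsphere G u r) : Set V) ⊆ R) :
    ∃ i, a i < r ∧ r ≤ b i := by
  obtain ⟨y, hy, hyR⟩ := Set.not_subset.1 hS
  have hyr : G.dist u y = r := (mem_gsphere G).1 hy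
  have hyL : y ∈ gball G u L := (mem_gball G).2 (hyr.trans_le hrL)
  obtain ⟨i, hyb, hya⟩ := Set.mem_iUnion.1 (hcover ⟨hyL, hyR⟩)
  simp only [mem_coe, mem_gball, hyr, not_le] at hyb hya
  exact ⟨i, hya, hyb⟩

lemma center_mem_of_diff_subset_iUnion_annuli
    (hcover : (↑(gball G u L) : Set V) \ R ⊆
      ⋃ i, ((↑(gball G u (b i)) : Set V) \ ↑(gball G u (a i)))) :
    u ∈ R := by
  by_contra hu
  obtain ⟨i, hi, -⟩ := exists_annulus_of_not_gsphere_subset hcover (Nat.zero_le L)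
    fun h => hu (h ((mem_gsphere G).2 SimpleGraph.dist_self))
  exact Nat.not_lt_zero _ hi

open Classical in
lemma card_filter_not_gsphere_subset_le [Fintype ι] {c : ι → ℕ} {ℓ : ℕ}
    (hwidth : ∀ i, b i - a i ≤ c i * ℓ)
    (hcover : (↑(gball G u L) : Set V) \ R ⊆
      ⋃ i, ((↑(gball G u (b i)) : Set V) \ ↑(gball G u (a i)))) :
    #{j ∈ Ico 1 ((L + 1) / (ℓ + 1)) | ¬ (↑(gsphere G u (j * (ℓ + 1))) : Set V) ⊆ R} ≤
      ∑ i, c i := by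
  refine card_le_sum_of_forall_exists_mul_mem_Ioc hwidth _ fun j hj => ?_
  obtain ⟨hjT, hj⟩ := mem_filter.1 hj
  exact exists_annulus_of_not_gsphere_subset hcover
    ((Nat.mul_add_one_le_sub_of_lt_div (mem_Ico.1 hjT).2).trans (Nat.sub_le L ℓ)) hj

end Annuli

theorem statement13_general {Gv : Type*} [Fintype Gv] (G : SimpleGraph Gv)
    (ℓ L : ℕ) (q : ℝ) (hq0 : 0 < q) (hq1 : q < 1)
    (u : Gv)
    (R : Set Gv)
    (f : Gv → ℝ) (hf : ∀ v, 0 ≤ f v)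
    (hsub : IsSubharmonicR G f ℓ q R u L)
    (n : ℕ) (aa bb cc : Fin n → ℕ)
    (hwidth : ∀ i, bb i - aa i ≤ cc i * ℓ)
    (C : ℕ) (hC : C = ∑ i, cc i)
    (hcover : (↑(gball G u L) : Set Gv) \ R ⊆
      ⋃ i, ((↑(gball G u (bb i)) : Set Gv) \ ↑(gball G u (aa i)))) :
    f u ≤ q ^ ((L + 1) / (ℓ + 1) - 2 * C) * Finset.univ.sup' ⟨u, Finset.mem_univ u⟩ f := by
  classical
  set T := (L + 1) / (ℓ + 1)
  set M := univ.sup' ⟨u, mem_univ u⟩ f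
  obtain hT | hT := Nat.eq_zero_or_pos T
  · simpa [hT] using le_sup' f (mem_univ u)
  let good (j : ℕ) : Prop := (↑(gsphere G u (j * (ℓ + 1))) : Set Gv) ⊆ R
  have hbad : #{j ∈ Ico 1 T | ¬ good j} ≤ C :=
    hC ▸ card_filter_not_gsphere_subset_le hwidth hcover
  have hcount : #{j ∈ Ico 1 T | good j} + #{j ∈ Ico 1 T | ¬ good j} = T - 1 := by
    rw [card_filter_add_card_filter_not, Nat.card_Ico]
  have hchain := le_pow_card_filter_mul_of_step (M := fun j => ballMax G f u (j * (ℓ + 1)))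
    hq0.le good hT (fun j _ _ => ballMax_mono f (Nat.mul_le_mul_right _ j.le_succ))
    fun j hj hjT hj' => by
      simpa [add_mul, add_assoc] using hsub.ballMax_le_mul_ballMax
        (Nat.le_mul_of_pos_left _ hj) (Nat.mul_add_one_le_sub_of_lt_div hjT) hj'
  calc f u ≤ q * ballMax G f u (1 * (ℓ + 1)) := by
        simpa using hsub.1 u (center_mem_of_diff_subset_iUnion_annuli hcover)
    _ ≤ q * (q ^ #{j ∈ Ico 1 T | good j} * M) := by
        gcongr
        exact hchain.trans (by gcongr; exact ballMax_le_sup' f u _)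
    _ = q ^ (#{j ∈ Ico 1 T | good j} + 1) * M := by ring
    _ ≤ q ^ (T - 2 * C) * M := by
        have hM : 0 ≤ M := (hf u).trans (le_sup' f (mem_univ u))
        exact mul_le_mul_of_nonneg_right (pow_le_pow_of_le_one hq0.le hq1.le (by omega)) hM

theorem statement13 {Gv : Type*} [Fintype Gv] (G : SimpleGraph Gv) (hconn : G.Connected)
    (ℓ L : ℕ) (hℓL : ℓ ≤ L) (q : ℝ) (hq0 : 0 < q) (hq1 : q < 1)
    (u : Gv) (hproper : gball G u L ≠ Finset.univ)
    (R : Set Gv) (hR : R ⊆ ↑(gball G u L))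
    (f : Gv → ℝ) (hf : ∀ v, 0 ≤ f v)
    (hsub : IsSubharmonicR G f ℓ q R u L)
    (n : ℕ) (aa bb cc : Fin n → ℕ) (hcc : ∀ i, 0 < cc i)
    (hwidth : ∀ i, bb i - aa i ≤ cc i * ℓ)
    (C : ℕ) (hC : C = ∑ i, cc i) (hCL : 2 * C * (ℓ + 1) < L)
    (hcover : (↑(gball G u L) : Set Gv) \ R ⊆
      ⋃ i, ((↑(gball G u (bb i)) : Set Gv) \ ↑(gball G u (aa i)))) :
    f u ≤ q ^ ((L + 1) / (ℓ + 1) - 2 * C) * Finset.univ.sup' ⟨u, Finset.mem_univ u⟩ f :=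
  statement13_general G ℓ L q hq0 hq1 u R f hf hsub n aa bb cc hwidth C hC hcover
end
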